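/- On phase space ℝ²ⁿ with canonical bracket, with H = Σⱼ pⱼ² + V as in the semi-simple system with potential V(x) = c₀(4Σ_{j≤m} xⱼ² + Σ_{j>m} xⱼ²) + Σ_{j≤m} cⱼxⱼ + Σ_{j>m} cⱼ/xⱼ² + c_{n+1}, for each index k with 1 ≤ k ≤ m the function F_k = p_k² + 4c₀x_k² + c_k x_k Poisson commutes with H. -/

import Mathlib

open Finset

/-- Canonical Poisson bracket on the phase space (Fin n → ℝ) × (Fin n → ℝ). -/
noncomputable def pbracket {n : ℕ} (F H : (Fin n → ℝ) × (Fin n → ℝ) → ℝ)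
    (z : (Fin n → ℝ) × (Fin n → ℝ)) : ℝ :=
  ∑ j : Fin n,
    (fderiv ℝ F z (Pi.single j 1, 0) * fderiv ℝ H z (0, Pi.single j 1)
      - fderiv ℝ H z (Pi.single j 1, 0) * fderiv ℝ F z (0, Pi.single j 1))

/-- The semi-simple (caged anisotropic/Smorodinski–Winternitz type) potential. -/
noncomputable def ssPotential (n m : ℕ) (c₀ : ℝ) (c : Fin n → ℝ) (cLast : ℝ)
    (x : Fin n → ℝ) : ℝ :=
  c₀ * (4 * ∑ j ∈ univ.filter (fun j : Fin n => (j : ℕ) < m), x j ^ 2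
          + ∑ j ∈ univ.filter (fun j : Fin n => m ≤ (j : ℕ)), x j ^ 2)
    + (∑ j ∈ univ.filter (fun j : Fin n => (j : ℕ) < m), c j * x j)
    + (∑ j ∈ univ.filter (fun j : Fin n => m ≤ (j : ℕ)), c j / x j ^ 2)
    + cLast

/-- coordinate projection onto position `j`. -/
noncomputable def Px {n : ℕ} (j : Fin n) : ((Fin n → ℝ) × (Fin n → ℝ)) →L[ℝ] ℝ :=
  (ContinuousLinearMap.proj j).comp (ContinuousLinearMap.fst ℝ _ _)

noncomputable def Pp {n : ℕ} (j : Fin n) : ((Fin n → ℝ) × (Fin n → ℝ)) →L[ℝ] ℝ :=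
  (ContinuousLinearMap.proj j).comp (ContinuousLinearMap.snd ℝ _ _)

@[simp] lemma Px_apply {n : ℕ} (j : Fin n) (v : (Fin n → ℝ) × (Fin n → ℝ)) :
    Px j v = v.1 j := rfl

@[simp] lemma Pp_apply {n : ℕ} (j : Fin n) (v : (Fin n → ℝ) × (Fin n → ℝ)) :
    Pp j v = v.2 j := rfl

lemma hasFDerivAt_x {n : ℕ} (j : Fin n) {g : ℝ → ℝ} {g' : ℝ}
    (z : (Fin n → ℝ) × (Fin n → ℝ)) (hg : HasDerivAt g g' (z.1 j)) :
    HasFDerivAt (fun z : (Fin n → ℝ) × (Fin n → ℝ) => g (z.1 j)) (g' • Px j) z :=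
  hg.comp_hasFDerivAt z (Px j).hasFDerivAt

lemma hasFDerivAt_p {n : ℕ} (j : Fin n) {g : ℝ → ℝ} {g' : ℝ}
    (z : (Fin n → ℝ) × (Fin n → ℝ)) (hg : HasDerivAt g g' (z.2 j)) :
    HasFDerivAt (fun z : (Fin n → ℝ) × (Fin n → ℝ) => g (z.2 j)) (g' • Pp j) z :=
  hg.comp_hasFDerivAt z (Pp j).hasFDerivAt

/-- for every oscillator direction k (k < m, 0-indexed), the function
F_k = p_k² + 4c₀x_k² + c_k x_k Poisson commutes with H = Σ pⱼ² + V on the open set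
where the inverse-square coordinates do not vanish. -/
theorem semisimple_oscillator_integrals
    (n m : ℕ) (hm : m ≤ n) (c₀ : ℝ) (c : Fin n → ℝ) (cLast : ℝ)
    (k : Fin n) (hk : (k : ℕ) < m) :
    ∀ z : (Fin n → ℝ) × (Fin n → ℝ),
      (∀ j : Fin n, m ≤ (j : ℕ) → z.1 j ≠ 0) →
      pbracket
        (fun z => z.2 k ^ 2 + 4 * c₀ * z.1 k ^ 2 + c k * z.1 k)
        (fun z => (∑ j : Fin n, z.2 j ^ 2) + ssPotential n m c₀ c cLast z.1)
        z = 0 := by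
  intro z hz
  let E := (Fin n → ℝ) × (Fin n → ℝ)
  -- basic one-coordinate derivatives
  have hx2 : ∀ j : Fin n, HasFDerivAt (fun z : E => z.1 j ^ 2) ((2 * z.1 j) • Px j) z := by
    intro j
    exact hasFDerivAt_x j z (by simpa using hasDerivAt_pow 2 (z.1 j))
  have hp2 : ∀ j : Fin n, HasFDerivAt (fun z : E => z.2 j ^ 2) ((2 * z.2 j) • Pp j) z := by
    intro j
    exact hasFDerivAt_p j z (by simpa using hasDerivAt_pow 2 (z.2 j))
  have hlin : ∀ j : Fin n, HasFDerivAt (fun z : E => c j * z.1 j) ((c j) • Px j) z := by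
    intro j
    exact hasFDerivAt_x j z (by simpa using (hasDerivAt_id (z.1 j)).const_mul (c j))
  have hinv : ∀ j : Fin n, m ≤ (j : ℕ) →
      HasFDerivAt (fun z : E => c j / z.1 j ^ 2)
        ((-(c j * (2 * z.1 j)) / (z.1 j ^ 2) ^ 2) • Px j) z := by
    intro j hj
    refine hasFDerivAt_x (g := fun t => c j / t ^ 2) j z ?_
    have h1 : HasDerivAt (fun t : ℝ => c j / t ^ 2)
        ((0 * z.1 j ^ 2 - c j * (2 * z.1 j ^ 1)) / (z.1 j ^ 2) ^ 2) (z.1 j) :=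
      (hasDerivAt_const (z.1 j) (c j)).div (hasDerivAt_pow 2 (z.1 j))
        (pow_ne_zero 2 (hz j hj))
    simpa using h1
  -- derivative of H
  have hH : HasFDerivAt
      (fun z : E => (∑ j : Fin n, z.2 j ^ 2) + ssPotential n m c₀ c cLast z.1)
      ((∑ j : Fin n, (2 * z.2 j) • Pp j)
        + ((c₀ • ((4:ℝ) • (∑ j ∈ univ.filter (fun j : Fin n => (j : ℕ) < m), (2 * z.1 j) • Px j)
              + ∑ j ∈ univ.filter (fun j : Fin n => m ≤ (j : ℕ)), (2 * z.1 j) • Px j))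
          + (∑ j ∈ univ.filter (fun j : Fin n => (j : ℕ) < m), (c j) • Px j)
          + (∑ j ∈ univ.filter (fun j : Fin n => m ≤ (j : ℕ)),
              (-(c j * (2 * z.1 j)) / (z.1 j ^ 2) ^ 2) • Px j))) z := by
    have hkin : HasFDerivAt (fun z : E => ∑ j : Fin n, z.2 j ^ 2)
        (∑ j : Fin n, (2 * z.2 j) • Pp j) z :=
      HasFDerivAt.fun_sum fun j _ => hp2 j
    have hV : HasFDerivAt (fun z : E => ssPotential n m c₀ c cLast z.1)
        ((c₀ • ((4:ℝ) • (∑ j ∈ univ.filter (fun j : Fin n => (j : ℕ) < m), (2 * z.1 j) • Px j)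
              + ∑ j ∈ univ.filter (fun j : Fin n => m ≤ (j : ℕ)), (2 * z.1 j) • Px j))
          + (∑ j ∈ univ.filter (fun j : Fin n => (j : ℕ) < m), (c j) • Px j)
          + (∑ j ∈ univ.filter (fun j : Fin n => m ≤ (j : ℕ)),
              (-(c j * (2 * z.1 j)) / (z.1 j ^ 2) ^ 2) • Px j)) z := by
      unfold ssPotential
      refine HasFDerivAt.add_const cLast ?_
      refine HasFDerivAt.add (HasFDerivAt.add ?_ ?_) ?_
      · refine HasFDerivAt.const_mul ?_ c₀
        refine HasFDerivAt.add ?_ (HasFDerivAt.fun_sum fun j hj => hx2 j)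
        have := HasFDerivAt.const_mul
          (HasFDerivAt.fun_sum (fun j (hj : j ∈ univ.filter (fun j : Fin n => (j : ℕ) < m)) => hx2 j)) (4:ℝ)
        simpa using this
      · exact HasFDerivAt.fun_sum fun j _ => hlin j
      · exact HasFDerivAt.fun_sum fun j hj => hinv j (by simpa using hj)
    exact hkin.add hV
  -- derivative of F
  have hF : HasFDerivAt
      (fun z : E => z.2 k ^ 2 + 4 * c₀ * z.1 k ^ 2 + c k * z.1 k)
      (((2 * z.2 k) • Pp k + (4 * c₀) • ((2 * z.1 k) • Px k)) + (c k) • Px k) z := by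
    refine HasFDerivAt.add (HasFDerivAt.add (hp2 k) ?_) (hlin k)
    exact HasFDerivAt.const_mul (hx2 k) (4 * c₀)
  rw [pbracket, hH.fderiv, hF.fderiv]
  have hxev : ∀ (i j : Fin n), Px i ((Pi.single j 1 : Fin n → ℝ), (0 : Fin n → ℝ))
      = if i = j then 1 else 0 := by
    intro i j; simp [Pi.single_apply]
  simp only [ContinuousLinearMap.add_apply, ContinuousLinearMap.smul_apply,
    ContinuousLinearMap.coe_sum', Finset.sum_apply, Px_apply, Pp_apply,
    Pi.single_apply, Pi.zero_apply, smul_eq_mul, mul_zero, mul_one, zero_add, add_zero,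
    mul_ite, ite_mul, zero_mul, Finset.sum_ite_eq', Finset.mem_filter, Finset.mem_univ,
    true_and]
  rw [Finset.sum_eq_single k]
  · have hk' : ¬ m ≤ (k : ℕ) := not_le.2 hk
    simp only [if_pos rfl, if_true, Finset.sum_const_zero, if_pos hk, if_neg hk',
      mul_zero, add_zero, zero_add]
    ring
  · intro j _ hj
    simp [Ne.symm hj]
  · intro h
    exact absurd (Finset.mem_univ k) h
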